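/- arXiv:2012.02025 — 4 statements merged into one kernel-verified Lean document; each statement's English description precedes it below -/
import Mathlib

section
/- Suppose assumption (A1) holds with d ≥ 2, η0 : [0,∞) → [0,∞) is continuous and nonincreasing, and the map x ↦ η0(|θ0 − x|²) is nonconstant on some open ball contained in χ. If g : [0,∞) → [0,∞) and β ∈ ℝ^d satisfy η0(|θ0 − x|²) = g(|β − x|²) for every x ∈ χ, then β = θ0 and g(t) = η0(t) for every t ∈ {|θ0 − x|² : x ∈ χ}. (Identifiability of the location and attenuation function, Lemma 2.1.) -/
/-!
On a ball `B ⊆ χ` the function `F y = η0 ‖θ0 - y‖²` also equals `g ‖β - y‖²`. If `β ≠ θ0`,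
rotating `y` on the sphere about `β` leaves `F` unchanged, while `‖θ0 - y‖²` has nonzero
derivative along the rotation as long as `y` is off the line through `θ0` and `β`; by the
one-dimensional inverse function theorem `η0` is then constant near `‖θ0 - y‖²`. A point
`y ≠ θ0` of that line is first rotated off it about `θ0`, which needs `d ≥ 2`. So `η0` is locally
constant on the interval `{‖θ0 - y‖² | y ∈ B} ∩ (0, ∞)`, hence constant there, and by continuity
`F` is constant on `B`, contradicting the nonconstancy assumption.
-/

open MeasureTheory Set Metric
open Filter Topology
open scoped RealInnerProductSpace

theorem IsPreconnected.apply_eq_of_eventually_eq {X Y : Type*} [TopologicalSpace X] {s : Set X}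
    (hs : IsPreconnected s) {f : X → Y} (hf : ∀ x ∈ s, ∀ᶠ y in 𝓝 x, f y = f x) {x y : X}
    (hx : x ∈ s) (hy : y ∈ s) : f x = f y := by
  have : PreconnectedSpace s := isPreconnected_iff_preconnectedSpace.mp hs
  have hloc : IsLocallyConstant (s.domRestrict f) := (IsLocallyConstant.iff_eventually_eq _).mpr
    fun z ↦ continuous_subtype_val.continuousAt.eventually (hf z z.2)
  exact hloc.apply_eq_of_preconnectedSpace ⟨x, hx⟩ ⟨y, hy⟩

section InnerProductSpace

variable {E : Type*} [NormedAddCommGroup E] [InnerProductSpace ℝ E]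

theorem norm_cos_smul_add_sin_smul {u w : E} (hw : ‖w‖ = ‖u‖) (huw : ⟪u, w⟫ = 0) (φ : ℝ) :
    ‖Real.cos φ • u + Real.sin φ • w‖ = ‖u‖ := by
  have h : ‖Real.cos φ • u + Real.sin φ • w‖ ^ 2 = ‖u‖ ^ 2 := by
    rw [norm_add_sq_real, norm_smul, norm_smul, real_inner_smul_left, real_inner_smul_right, huw,
      hw, mul_pow, mul_pow, Real.norm_eq_abs, Real.norm_eq_abs, sq_abs, sq_abs]
    linear_combination ‖u‖ ^ 2 * Real.cos_sq_add_sin_sq φ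
  exact (pow_left_inj₀ (norm_nonneg _) (norm_nonneg _) two_ne_zero).mp h

theorem exists_norm_eq_inner_eq_zero [FiniteDimensional ℝ E] (hE : 2 ≤ Module.finrank ℝ E)
    (v : E) {r : ℝ} (hr : 0 ≤ r) : ∃ e : E, ‖e‖ = r ∧ ⟪v, e⟫ = 0 := by
  have hspan : Module.finrank ℝ (ℝ ∙ v) ≤ 1 := by
    simpa using finrank_span_le_card ({v} : Set E)
  have hperp : (ℝ ∙ v)ᗮ ≠ ⊥ := by
    intro h
    have := (ℝ ∙ v).finrank_add_finrank_orthogonal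
    rw [h, finrank_bot] at this
    omega
  obtain ⟨e, he, he0⟩ := Submodule.exists_mem_ne_zero_of_ne_bot hperp
  refine ⟨(r * ‖e‖⁻¹) • e, norm_smul_inv_norm' hr he0, ?_⟩
  rw [real_inner_smul_right, Submodule.mem_orthogonal_singleton_iff_inner_right.mp he, mul_zero]

theorem exists_norm_eq_inner_eq_zero_inner_ne_zero {u v : E} (h : LinearIndependent ℝ ![u, v]) :
    ∃ w : E, ‖w‖ = ‖u‖ ∧ ⟪u, w⟫ = 0 ∧ ⟪v, w⟫ ≠ 0 := by
  have hu : u ≠ 0 := h.ne_zero 0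
  have hu2 : ‖u‖ ^ 2 ≠ 0 := by positivity
  set w₀ := v - (⟪v, u⟫ / ‖u‖ ^ 2) • u
  have hw₀ : w₀ ≠ 0 := sub_ne_zero.mpr ((LinearIndependent.pair_iff' hu).mp h _).symm
  have huw₀ : ⟪u, w₀⟫ = 0 := by
    rw [inner_sub_right, real_inner_smul_right, real_inner_self_eq_norm_sq, real_inner_comm,
      div_mul_cancel₀ _ hu2, sub_self]
  have hvw₀ : ⟪v, w₀⟫ = ‖w₀‖ ^ 2 := by
    have hv : v = w₀ + (⟪v, u⟫ / ‖u‖ ^ 2) • u := (sub_add_cancel _ _).symm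
    conv_lhs => rw [hv]
    rw [inner_add_left, real_inner_smul_left, real_inner_comm u, huw₀, mul_zero, add_zero,
      real_inner_self_eq_norm_sq]
  refine ⟨(‖u‖ * ‖w₀‖⁻¹) • w₀, norm_smul_inv_norm' (norm_nonneg u) hw₀, ?_, ?_⟩
  · rw [real_inner_smul_right, huw₀, mul_zero]
  · rw [real_inner_smul_right, hvw₀]
    have := norm_ne_zero_iff.mpr hw₀
    have := norm_ne_zero_iff.mpr hu
    positivity

theorem eventually_eq_near_norm_sub_sq_of_inner_ne_zero {B : Set E} {f g : ℝ → ℝ} {a b : E}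
    (hB : IsOpen B) (hfg : ∀ y ∈ B, f (‖a - y‖ ^ 2) = g (‖b - y‖ ^ 2))
    {x w : E} (hx : x ∈ B) (hw : ‖w‖ = ‖x - b‖) (hxw : ⟪x - b, w⟫ = 0) (haw : ⟪a - b, w⟫ ≠ 0) :
    ∀ᶠ t in 𝓝 (‖a - x‖ ^ 2), f t = f (‖a - x‖ ^ 2) := by
  set γ : ℝ → E := fun φ ↦ b + (Real.cos φ • (x - b) + Real.sin φ • w)
  have hγ0 : γ 0 = x := by simp [γ]
  have hγB : ∀ᶠ φ in 𝓝 0, γ φ ∈ B :=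
    (by fun_prop : Continuous γ).continuousAt.eventually_mem (hγ0 ▸ hB.mem_nhds hx)
  have hγ : HasStrictDerivAt γ w 0 := by
    have := ((Real.hasStrictDerivAt_cos 0).smul_const (x - b)).add
      ((Real.hasStrictDerivAt_sin 0).smul_const w) |>.const_add b
    exact this.congr_deriv (by simp)
  have hdist : HasStrictDerivAt (fun φ ↦ ‖a - γ φ‖ ^ 2) (-2 * ⟪a - b, w⟫) 0 := by
    have := (hasStrictFDerivAt_norm_sq (a - γ 0)).comp_hasStrictDerivAt 0 (hγ.const_sub a)
    refine this.congr_deriv ?_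
    rw [inner_sub_left] at hxw
    simp only [hγ0, map_sub, smul_apply, sub_apply,
      coe_innerSL_apply, inner_neg_right, nsmul_eq_mul, Nat.cast_ofNat, inner_sub_left]
    linarith
  rw [← hγ0, ← hdist.map_nhds_eq (by simpa using haw), eventually_map]
  filter_upwards [hγB] with φ hφ
  have hsphere : ‖b - γ φ‖ = ‖b - γ 0‖ := by
    simp only [γ, sub_add_cancel_left, norm_neg, norm_cos_smul_add_sin_smul hw hxw]
  rw [hfg _ hφ, hfg _ (hγ0 ▸ hx), hsphere]

theorem exists_mem_norm_sub_eq_inner_ne_zero {B : Set E} (hB : IsOpen B) {a y e : E}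
    (hy : y ∈ B) (hya : y ≠ a) (he : ‖e‖ = ‖y - a‖) (hye : ⟪y - a, e⟫ = 0) :
    ∃ x ∈ B, ‖a - x‖ = ‖a - y‖ ∧ ⟪x - a, e⟫ ≠ 0 := by
  set σ : ℝ → E := fun ψ ↦ a + (Real.cos ψ • (y - a) + Real.sin ψ • e)
  have hσ0 : σ 0 = y := by simp [σ]
  have hσB : ∀ᶠ ψ in 𝓝[>] 0, σ ψ ∈ B := nhdsWithin_le_nhds <|
    (by fun_prop : Continuous σ).continuousAt.eventually_mem (hσ0 ▸ hB.mem_nhds hy)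
  have hsin : ∀ᶠ ψ in 𝓝[>] (0 : ℝ), 0 < Real.sin ψ :=
    mem_of_superset (Ioo_mem_nhdsGT Real.pi_pos) fun _ hψ ↦
      Real.sin_pos_of_pos_of_lt_pi hψ.1 hψ.2
  obtain ⟨ψ, hψB, hψ⟩ := (hσB.and hsin).exists
  have he0 : ‖e‖ ≠ 0 := by rw [he, norm_ne_zero_iff, sub_ne_zero]; exact hya
  refine ⟨σ ψ, hψB, ?_, ?_⟩
  · rw [← norm_neg, neg_sub, ← norm_neg (a - y), neg_sub]
    simp only [σ, add_sub_cancel_left, norm_cos_smul_add_sin_smul he hye]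
  · simp only [σ, add_sub_cancel_left, inner_add_left, real_inner_smul_left, hye, mul_zero,
      zero_add, real_inner_self_eq_norm_sq]
    positivity

theorem eventually_eq_near_norm_sub_sq [FiniteDimensional ℝ E] (hE : 2 ≤ Module.finrank ℝ E)
    {B : Set E} {f g : ℝ → ℝ} {a b : E} (hB : IsOpen B)
    (hfg : ∀ y ∈ B, f (‖a - y‖ ^ 2) = g (‖b - y‖ ^ 2)) (hab : a ≠ b)
    {y : E} (hy : y ∈ B) (hya : y ≠ a) :
    ∀ᶠ t in 𝓝 (‖a - y‖ ^ 2), f t = f (‖a - y‖ ^ 2) := by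
  have hv : a - b ≠ 0 := sub_ne_zero.mpr hab
  obtain ⟨x, hx, hxy, hind⟩ :
      ∃ x ∈ B, ‖a - x‖ = ‖a - y‖ ∧ LinearIndependent ℝ ![x - b, a - b] := by
    by_cases hyb : LinearIndependent ℝ ![y - b, a - b]
    · exact ⟨y, hy, rfl, hyb⟩
    rw [LinearIndependent.pair_symm_iff, LinearIndependent.pair_iff' hv] at hyb
    push Not at hyb
    obtain ⟨c, hc⟩ := hyb
    obtain ⟨e, he, hve⟩ := exists_norm_eq_inner_eq_zero hE (a - b) (norm_nonneg (y - a))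
    have hye : ⟪y - a, e⟫ = 0 := by
      rw [show y - a = (c - 1) • (a - b) by rw [sub_smul, one_smul, hc]; abel,
        real_inner_smul_left, hve, mul_zero]
    obtain ⟨x, hx, hxy, hxe⟩ := exists_mem_norm_sub_eq_inner_ne_zero hB hy hya he hye
    refine ⟨x, hx, hxy, ?_⟩
    rw [LinearIndependent.pair_symm_iff, LinearIndependent.pair_iff' hv]
    intro c' hc'
    apply hxe
    rw [show x - a = c' • (a - b) - (a - b) by rw [hc']; abel, inner_sub_left,
      real_inner_smul_left, hve, mul_zero, sub_zero]
  obtain ⟨w, hw, hxw, haw⟩ := exists_norm_eq_inner_eq_zero_inner_ne_zero hind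
  rw [← hxy]
  exact eventually_eq_near_norm_sub_sq_of_inner_ne_zero hB hfg hx hw hxw haw

theorem apply_norm_sub_sq_eq_of_ne [FiniteDimensional ℝ E] (hE : 2 ≤ Module.finrank ℝ E)
    {B : Set E} (hB : IsOpen B) (hBc : IsPreconnected B) {f g : ℝ → ℝ}
    (hf : ContinuousOn f (Ici 0)) {a b : E} (hfg : ∀ y ∈ B, f (‖a - y‖ ^ 2) = g (‖b - y‖ ^ 2))
    (hab : a ≠ b) : ∀ y ∈ B, ∀ y' ∈ B, f (‖a - y‖ ^ 2) = f (‖a - y'‖ ^ 2) := by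
  set F : E → ℝ := fun y ↦ f (‖a - y‖ ^ 2)
  have hradii : IsPreconnected ((fun y ↦ ‖a - y‖ ^ 2) '' B ∩ Ioi 0) :=
    ((hBc.image _ (by fun_prop : Continuous fun y ↦ ‖a - y‖ ^ 2).continuousOn).ordConnected.inter
      ordConnected_Ioi).isPreconnected
  have hoff : ∀ y ∈ B \ {a}, ∀ y' ∈ B \ {a}, F y = F y' := by
    have hmem : ∀ y ∈ B \ {a}, ‖a - y‖ ^ 2 ∈ (fun y ↦ ‖a - y‖ ^ 2) '' B ∩ Ioi 0 :=
      fun y hy ↦ ⟨mem_image_of_mem _ hy.1, mem_Ioi.mpr <| by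
        have : a - y ≠ 0 := sub_ne_zero.mpr (Ne.symm hy.2)
        positivity⟩
    intro y hy y' hy'
    refine hradii.apply_eq_of_eventually_eq ?_ (hmem y hy) (hmem y' hy')
    rintro _ ⟨⟨z, hz, rfl⟩, hzpos⟩
    refine eventually_eq_near_norm_sub_sq hE hB hfg hab hz fun hza ↦ ?_
    simp [hza] at hzpos
  have hFcont : ContinuousOn F B :=
    hf.comp (by fun_prop : Continuous fun y ↦ ‖a - y‖ ^ 2).continuousOn
      fun y _ ↦ mem_Ici.mpr (sq_nonneg _)
  have : Nontrivial E := Module.nontrivial_of_finrank_pos (R := ℝ) (by omega)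
  have hdense : B ⊆ closure (B \ {a}) := fun y hy ↦ by
    have : y ∈ closure {a}ᶜ := by rw [closure_compl_singleton]; trivial
    exact hB.inter_closure ⟨hy, this⟩
  rcases (B \ {a}).eq_empty_or_nonempty with hempty | ⟨y₀, hy₀⟩
  · intro y hy y' hy'
    rw [sdiff_eq_empty.mp hempty hy, sdiff_eq_empty.mp hempty hy']
  · have hconst : EqOn F (fun _ ↦ F y₀) B :=
      EqOn.of_subset_closure (fun y hy ↦ hoff y hy y₀ hy₀) hFcont continuousOn_const sdiff_subset
        hdense
    intro y hy y' hy'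
    exact (hconst hy).trans (hconst hy').symm

end InnerProductSpace

theorem identifiability_of_location_and_attenuation_general
    {d : ℕ} (hd : 2 ≤ d)
    (χ : Set (EuclideanSpace ℝ (Fin d)))
    (θ0 : EuclideanSpace ℝ (Fin d))
    -- attenuation function
    (η0 : ℝ → ℝ)
    (hη0cont : ContinuousOn η0 (Ici 0))
    -- nonconstancy on an open ball contained in χ
    (hnc : ∃ (c : EuclideanSpace ℝ (Fin d)) (r : ℝ), 0 < r ∧ ball c r ⊆ χ ∧
      ∃ x ∈ ball c r, ∃ y ∈ ball c r, η0 (‖θ0 - x‖ ^ 2) ≠ η0 (‖θ0 - y‖ ^ 2))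
    -- the competing parametrization
    (g : ℝ → ℝ)
    (β : EuclideanSpace ℝ (Fin d))
    (heq : ∀ x ∈ χ, η0 (‖θ0 - x‖ ^ 2) = g (‖β - x‖ ^ 2)) :
    β = θ0 ∧ ∀ x ∈ χ, g (‖θ0 - x‖ ^ 2) = η0 (‖θ0 - x‖ ^ 2) := by
  obtain ⟨c, r, -, hball, x₁, hx₁, x₂, hx₂, hne⟩ := hnc
  have hβ : β = θ0 := by
    by_contra hβ
    have hdim : 2 ≤ Module.finrank ℝ (EuclideanSpace ℝ (Fin d)) := by
      rwa [finrank_euclideanSpace_fin]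
    exact hne <| apply_norm_sub_sq_eq_of_ne hdim isOpen_ball (convex_ball c r).isPreconnected
      hη0cont (fun y hy ↦ heq y (hball hy)) (Ne.symm hβ) x₁ hx₁ x₂ hx₂
  exact ⟨hβ, fun x hx ↦ by rw [heq x hx, hβ]⟩

/-- **Identifiability of the location and attenuation function (Lemma 2.1).**
Under assumption (A1) with `d ≥ 2`, if `η0` is continuous, nonincreasing and nonnegative on
`[0,∞)`, the map `x ↦ η0 |θ0 - x|²` is nonconstant on some open ball contained in `χ`, and
`g : [0,∞) → [0,∞)`, `β ∈ ℝ^d` satisfy `η0 |θ0 - x|² = g |β - x|²` for every `x ∈ χ`,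
then `β = θ0` and `g = η0` on `{|θ0 - x|² : x ∈ χ}`. -/
theorem identifiability_of_location_and_attenuation
    {d : ℕ} (hd : 2 ≤ d)
    (χ Θ : Set (EuclideanSpace ℝ (Fin d)))
    (μX : Measure (EuclideanSpace ℝ (Fin d))) [IsProbabilityMeasure μX]
    (T : ℝ)
    -- (A1)
    (hχbd : Bornology.IsBounded χ) (hχconv : Convex ℝ χ)
    (hχint : (interior χ).Nonempty)
    (hμsupp : μX χᶜ = 0)
    (Cdens : ℝ) (hdens : ∀ s, μX s ≤ ENNReal.ofReal Cdens * volume s)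
    (hΘbd : Bornology.IsBounded Θ) (hΘint : (interior Θ).Nonempty)
    (θ0 : EuclideanSpace ℝ (Fin d)) (hθ0 : θ0 ∈ interior Θ)
    (hχT : ∀ x ∈ χ, ‖x‖ ≤ T) (hΘT : ∀ θ ∈ Θ, ‖θ‖ ≤ T)
    -- attenuation function
    (η0 : ℝ → ℝ)
    (hη0cont : ContinuousOn η0 (Ici 0))
    (hη0anti : AntitoneOn η0 (Ici 0))
    (hη0nonneg : ∀ t ∈ Ici (0 : ℝ), 0 ≤ η0 t)
    -- nonconstancy on an open ball contained in χ
    (hnc : ∃ (c : EuclideanSpace ℝ (Fin d)) (r : ℝ), 0 < r ∧ ball c r ⊆ χ ∧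
      ∃ x ∈ ball c r, ∃ y ∈ ball c r, η0 (‖θ0 - x‖ ^ 2) ≠ η0 (‖θ0 - y‖ ^ 2))
    -- the competing parametrization
    (g : ℝ → ℝ) (hgnonneg : ∀ t ∈ Ici (0 : ℝ), 0 ≤ g t)
    (β : EuclideanSpace ℝ (Fin d))
    (heq : ∀ x ∈ χ, η0 (‖θ0 - x‖ ^ 2) = g (‖β - x‖ ^ 2)) :
    β = θ0 ∧ ∀ x ∈ χ, g (‖θ0 - x‖ ^ 2) = η0 (‖θ0 - x‖ ^ 2) :=
  identifiability_of_location_and_attenuation_general hd χ θ0 η0 hη0cont hnc g β heq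
end

section
/- Let d ≥ 2, let B ⊆ ℝ^d be a nonempty open connected set, let θ0, β ∈ ℝ^d and r, s > 0. If the closed balls satisfy ∅ ≠ {x : |x − θ0| ≤ r} ∩ B = {x : |x − β| ≤ s} ∩ B and this common intersection is a proper subset of B, then θ0 = β and r = s. (Geometric lemma underlying the identifiability proof: a nonempty proper trace of a closed ball on an open connected set determines the ball.) -/
/-!
Since `B` is connected and meets both `closedBall θ0 r` and its complement, it contains a point `x`
of `sphere θ0 r`; since `B` is open, the frontiers of the two balls, i.e. the two spheres, have the
same trace on `B`. Every point `y` common to both spheres satisfies `⟪y - x, β - θ0⟫ = 0`, so the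
linear form `⟪·, β - θ0⟫` is constant on a neighbourhood of `x` in `sphere θ0 r`. Moving from `x`
along the great circles `t ↦ cos t • e + sin t • w` with `w ⊥ e` in both directions (this is where
`d ≥ 2` enters) shows that this form vanishes, i.e. `θ0 = β`, and then `r = s`.
-/

open Set Metric Module Filter Topology Real
open scoped RealInnerProductSpace

theorem IsPreconnected.sphere_inter_nonempty {X : Type*} [PseudoMetricSpace X] {U : Set X}
    (hU : IsPreconnected U) {a : X} {r : ℝ} (hin : (closedBall a r ∩ U).Nonempty)
    (hout : (U \ closedBall a r).Nonempty) : (sphere a r ∩ U).Nonempty := by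
  obtain ⟨y, hy, hyU⟩ := hin
  obtain ⟨z, hzU, hz⟩ := hout
  obtain ⟨x, hxU, hx⟩ := hU.intermediate_value hyU hzU
    (continuous_id.dist continuous_const).continuousOn
    ⟨mem_closedBall.mp hy, (not_le.mp (mt mem_closedBall.mpr hz)).le⟩
  exact ⟨x, hx, hxU⟩

theorem sphere_inter_eq_of_closedBall_inter_eq {F : Type*} [NormedAddCommGroup F]
    [NormedSpace ℝ F] [Nontrivial F] {U : Set F} (hU : IsOpen U) {a b : F} {r s : ℝ}
    (h : closedBall a r ∩ U = closedBall b s ∩ U) : sphere a r ∩ U = sphere b s ∩ U := by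
  rw [← frontier_closedBall', ← frontier_closedBall', ← frontier_inter_open_inter hU, h,
    frontier_inter_open_inter hU]

section InnerProductSpace

variable {E : Type*} [NormedAddCommGroup E] [InnerProductSpace ℝ E]

theorem exists_norm_eq_one_inner_eq_zero (hE : 2 ≤ finrank ℝ E) (v : E) :
    ∃ w : E, ‖w‖ = 1 ∧ ⟪v, w⟫ = 0 := by
  have : FiniteDimensional ℝ E := .of_finrank_pos (by omega)
  have hspan : finrank ℝ (ℝ ∙ v) ≤ 1 := by
    simpa using finrank_span_le_card (R := ℝ) ({v} : Set E)
  have : Nontrivial (ℝ ∙ v)ᗮ := by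
    apply nontrivial_of_finrank_pos (R := ℝ)
    have := (ℝ ∙ v).finrank_add_finrank_orthogonal
    omega
  obtain ⟨w, hw⟩ := exists_norm_eq (ℝ ∙ v)ᗮ zero_le_one
  exact ⟨w, hw, Submodule.mem_orthogonal_singleton_iff_inner_right.mp w.2⟩

theorem norm_cos_smul_add_sin_smul_s1 {e w : E} (he : ‖e‖ = 1) (hw : ‖w‖ = 1) (hew : ⟪e, w⟫ = 0)
    (t : ℝ) : ‖cos t • e + sin t • w‖ = 1 := by
  have hsq : ‖cos t • e + sin t • w‖ ^ 2 = 1 := by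
    rw [norm_add_sq_real, real_inner_smul_left, real_inner_smul_right, hew, norm_smul,
      norm_smul, he, hw, Real.norm_eq_abs, Real.norm_eq_abs]
    nlinarith [sin_sq_add_cos_sq t, sq_abs (sin t), sq_abs (cos t)]
  exact (pow_eq_one_iff_of_nonneg (norm_nonneg _) two_ne_zero).mp hsq

theorem inner_eq_zero_of_eventually_inner_eq {e w c : E} (he : ‖e‖ = 1) (hw : ‖w‖ = 1)
    (hew : ⟪e, w⟫ = 0) (h : ∀ᶠ u in 𝓝 e, ‖u‖ = 1 → ⟪u, c⟫ = ⟪e, c⟫) :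
    ⟪e, c⟫ = 0 ∧ ⟪w, c⟫ = 0 := by
  set γ : ℝ → E := fun t ↦ cos t • e + sin t • w
  have hγ : Tendsto γ (𝓝 0) (𝓝 e) := by
    simpa [γ] using (by fun_prop : Continuous γ).tendsto 0
  have hpm : ∀ᶠ t in 𝓝 (0 : ℝ), ⟪γ t, c⟫ = ⟪e, c⟫ ∧ ⟪γ (-t), c⟫ = ⟪e, c⟫ := by
    have h' := hγ.eventually h
    filter_upwards [h', (continuous_neg.tendsto' (0 : ℝ) 0 neg_zero).eventually h']
      with t h₁ h₂
    exact ⟨h₁ (norm_cos_smul_add_sin_smul_s1 he hw hew t),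
      h₂ (norm_cos_smul_add_sin_smul_s1 he hw hew (-t))⟩
  obtain ⟨t, ⟨hplus, hminus⟩, ht0, htπ⟩ :=
    ((hpm.filter_mono nhdsWithin_le_nhds).and (Ioo_mem_nhdsGT pi_pos)).exists
  simp only [γ, inner_add_left, real_inner_smul_left, cos_neg, sin_neg, neg_mul] at hplus hminus
  have hsin : sin t ≠ 0 := (sin_pos_of_pos_of_lt_pi ht0 htπ).ne'
  have hcos : cos t ≠ 1 := fun h ↦
    ht0.ne' ((cos_eq_one_iff_of_lt_of_lt (by linarith) (by linarith)).mp h)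
  constructor
  · have : (cos t - 1) * ⟪e, c⟫ = 0 := by linarith
    simpa [sub_eq_zero, hcos] using this
  · have : sin t * ⟪w, c⟫ = 0 := by linarith
    simpa [hsin] using this

theorem eq_zero_of_eventually_inner_eq (hE : 2 ≤ finrank ℝ E) {e c : E} (he : ‖e‖ = 1)
    (h : ∀ᶠ u in 𝓝 e, ‖u‖ = 1 → ⟪u, c⟫ = ⟪e, c⟫) : c = 0 := by
  obtain ⟨w, hw, hew⟩ := exists_norm_eq_one_inner_eq_zero hE e
  have hec : ⟪e, c⟫ = 0 := (inner_eq_zero_of_eventually_inner_eq he hw hew h).1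
  by_contra hc
  have hc' : ‖c‖ ≠ 0 := norm_ne_zero_iff.mpr hc
  have hunit : ‖‖c‖⁻¹ • c‖ = 1 := by rw [norm_smul, norm_inv, norm_norm, inv_mul_cancel₀ hc']
  have hperp : ⟪e, ‖c‖⁻¹ • c⟫ = 0 := by rw [real_inner_smul_right, hec, mul_zero]
  have hcc := (inner_eq_zero_of_eventually_inner_eq he hunit hperp h).2
  rw [real_inner_smul_left, real_inner_self_eq_norm_sq] at hcc
  simp [hc'] at hcc

theorem center_eq_of_sphere_inter_subset (hE : 2 ≤ finrank ℝ E) {U : Set E} (hU : IsOpen U)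
    {θ β x : E} {r s : ℝ} (hr : 0 < r) (hx : x ∈ sphere θ r) (hxU : x ∈ U)
    (h : sphere θ r ∩ U ⊆ sphere β s) : θ = β := by
  set e := r⁻¹ • (x - θ)
  have hθe : θ + r • e = x := by
    rw [smul_smul, mul_inv_cancel₀ hr.ne', one_smul, add_sub_cancel]
  have he : ‖e‖ = 1 := by
    rw [norm_smul, norm_inv, Real.norm_eq_abs, abs_of_pos hr, ← dist_eq_norm,
      mem_sphere.mp hx, inv_mul_cancel₀ hr.ne']
  have hnear : ∀ᶠ u in 𝓝 e, θ + r • u ∈ U := by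
    have : Tendsto (fun u : E ↦ θ + r • u) (𝓝 e) (𝓝 x) := by
      rw [← hθe]; exact (by fun_prop : Continuous fun u : E ↦ θ + r • u).tendsto e
    exact this.eventually (hU.mem_nhds hxU)
  refine (sub_eq_zero.mp (eq_zero_of_eventually_inner_eq hE he ?_)).symm
  filter_upwards [hnear] with u hu hu1
  have hy : θ + r • u ∈ sphere θ r := by
    rw [mem_sphere, dist_eq_norm, add_sub_cancel_left, norm_smul, hu1, mul_one,
      Real.norm_eq_abs, abs_of_pos hr]
  have hθ : dist (θ + r • u) θ = dist x θ := (mem_sphere.mp hy).trans (mem_sphere.mp hx).symm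
  have hβ : dist (θ + r • u) β = dist x β :=
    (mem_sphere.mp (h ⟨hy, hu⟩)).trans (mem_sphere.mp (h ⟨hx, hxU⟩)).symm
  have hperp := EuclideanGeometry.inner_vsub_vsub_of_dist_eq_of_dist_eq hθ hβ
  rw [← hθe, vsub_eq_sub, vsub_eq_sub, add_sub_add_left_eq_sub, ← smul_sub,
    real_inner_smul_right, inner_sub_right] at hperp
  have := (mul_eq_zero.mp hperp).resolve_left hr.ne'
  rw [real_inner_comm (β - θ), real_inner_comm (β - θ)]
  linarith

end InnerProductSpace

theorem closedBall_trace_determines_ball_general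
    {d : ℕ} (hd : 2 ≤ d)
    (B : Set (EuclideanSpace ℝ (Fin d)))
    (hBopen : IsOpen B) (hBconn : IsConnected B)
    (θ0 β : EuclideanSpace ℝ (Fin d)) (r s : ℝ)
    (hr : 0 < r)
    (hne : (closedBall θ0 r ∩ B).Nonempty)
    (heq : closedBall θ0 r ∩ B = closedBall β s ∩ B)
    (hproper : closedBall θ0 r ∩ B ⊂ B) :
    θ0 = β ∧ r = s := by
  have hdim : 2 ≤ finrank ℝ (EuclideanSpace ℝ (Fin d)) := by rwa [finrank_euclideanSpace_fin]
  have : Nontrivial (EuclideanSpace ℝ (Fin d)) := nontrivial_of_finrank_pos (R := ℝ) (by omega)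
  obtain ⟨p, hpB, hp⟩ := exists_of_ssubset hproper
  obtain ⟨x, hx, hxB⟩ :=
    hBconn.isPreconnected.sphere_inter_nonempty hne ⟨p, hpB, fun h ↦ hp ⟨h, hpB⟩⟩
  have hsub : sphere θ0 r ∩ B ⊆ sphere β s := fun y hy ↦
    (sphere_inter_eq_of_closedBall_inter_eq hBopen heq ▸ hy).1
  obtain rfl : θ0 = β := center_eq_of_sphere_inter_subset hdim hBopen hr hx hxB hsub
  exact ⟨rfl, (mem_sphere.mp hx).symm.trans (mem_sphere.mp (hsub ⟨hx, hxB⟩))⟩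

/-- **Geometric lemma underlying the identifiability proof.**
Let `d ≥ 2` and let `B ⊆ ℝ^d` be a nonempty open connected set. If the traces on `B` of the
closed balls `closedBall θ0 r` and `closedBall β s` coincide, are nonempty, and form a proper
subset of `B`, then `θ0 = β` and `r = s`. -/
theorem closedBall_trace_determines_ball
    {d : ℕ} (hd : 2 ≤ d)
    (B : Set (EuclideanSpace ℝ (Fin d)))
    (hBopen : IsOpen B) (hBconn : IsConnected B)
    (θ0 β : EuclideanSpace ℝ (Fin d)) (r s : ℝ)
    (hr : 0 < r) (hs : 0 < s)
    (hne : (closedBall θ0 r ∩ B).Nonempty)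
    (heq : closedBall θ0 r ∩ B = closedBall β s ∩ B)
    (hproper : closedBall θ0 r ∩ B ⊂ B) :
    θ0 = β ∧ r = s :=
  closedBall_trace_determines_ball_general hd B hBopen hBconn θ0 β r s hr hne heq hproper
end

section
/- Suppose assumptions (A1)–(A3) hold, and let (X_1, Y_1), …, (X_n, Y_n) be i.i.d. from the model. For each θ ∈ Θ let η̃_θ be any minimizer of Q_n(·, θ) over M, extended to [0,4T²] as a right-continuous piecewise constant function with jumps only at the points |θ − X_i|². Then sup_{θ∈Θ} ‖η̃_θ‖_∞ = O_p(n^{1/q}); that is, for every δ > 0 there exists C < ∞ such that P(sup_{θ∈Θ} sup_{t∈[0,4T²]} |η̃_θ(t)| > C n^{1/q}) ≤ δ for all sufficiently large n. (Theorem 3.1, first assertion.) -/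
/-!
Truncating a nonnegative nonincreasing fit at a level `c ≥ max_i Y_i` keeps it in the class and
strictly lowers the least squares criterion unless no fitted value exceeds `c`; since every value
of `η̃_θ` is a fitted value, `‖η̃_θ‖_∞ ≤ η0 0 + max_{i<n} |ε_i|` for every `θ` simultaneously.
A union bound with Markov's inequality for `|ε_i|^q` gives
`P(max_{i<n} |ε_i| > K n^{1/q}) ≤ E|ε|^q / K^q`.
-/

open MeasureTheory ProbabilityTheory Set Metric

theorem sum_sq_sub_min_lt {ι : Type*} {s : Finset ι} {y v : ι → ℝ} {c : ℝ}
    (hy : ∀ i ∈ s, y i ≤ c) (hv : ∃ j ∈ s, c < v j) :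
    ∑ i ∈ s, (y i - min (v i) c) ^ 2 < ∑ i ∈ s, (y i - v i) ^ 2 := by
  obtain ⟨j, hj, hjc⟩ := hv
  refine Finset.sum_lt_sum (fun i hi => ?_) ⟨j, hj, ?_⟩
  · rcases le_or_gt (v i) c with h | h
    · rw [min_eq_left h]
    · rw [min_eq_right h.le]
      nlinarith [hy i hi]
  · rw [min_eq_right hjc.le]
    nlinarith [hy j hj]

theorem antitoneOn_lse_apply_le {ι α : Type*} [Preorder α] {I : Set α} {s : Finset ι}
    {y : ι → ℝ} {z : ι → α} {f : α → ℝ} (hf : AntitoneOn f I) (hf0 : ∀ t ∈ I, 0 ≤ f t)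
    (hmin : ∀ g : α → ℝ, AntitoneOn g I → (∀ t ∈ I, 0 ≤ g t) →
      ∑ i ∈ s, (y i - f (z i)) ^ 2 ≤ ∑ i ∈ s, (y i - g (z i)) ^ 2)
    {c : ℝ} (hc : 0 ≤ c) (hy : ∀ i ∈ s, y i ≤ c) {j : ι} (hj : j ∈ s) : f (z j) ≤ c := by
  by_contra! hjc
  have htrunc_anti : AntitoneOn (fun t => min (f t) c) I :=
    fun a ha b hb hab => min_le_min_right c (hf ha hb hab)
  have htrunc_nonneg : ∀ t ∈ I, 0 ≤ min (f t) c := fun t ht => le_min (hf0 t ht) hc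
  exact (sum_sq_sub_min_lt hy ⟨j, hj, hjc⟩).not_ge (hmin _ htrunc_anti htrunc_nonneg)

section Probability

variable {Ω : Type*} [MeasurableSpace Ω] {μ : Measure Ω} [IsFiniteMeasure μ]

theorem measure_lt_abs_le_integral_rpow_div {f : Ω → ℝ} {q a : ℝ} (hq : 0 < q) (ha : 0 < a)
    (hint : Integrable (fun ω => |f ω| ^ q) μ) :
    μ {ω | a < |f ω|} ≤ ENNReal.ofReal ((∫ ω, |f ω| ^ q ∂μ) / a ^ q) := by
  have haq : 0 < a ^ q := Real.rpow_pos_of_pos ha q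
  have hmarkov := mul_meas_ge_le_integral_of_nonneg
    (ae_of_all μ fun ω => Real.rpow_nonneg (abs_nonneg (f ω)) q) hint (a ^ q)
  calc μ {ω | a < |f ω|} ≤ μ {ω | a ^ q ≤ |f ω| ^ q} :=
        measure_mono fun ω h => (Real.rpow_lt_rpow ha.le h hq).le
    _ = ENNReal.ofReal (μ.real {ω | a ^ q ≤ |f ω| ^ q}) := (ofReal_measureReal).symm
    _ ≤ ENNReal.ofReal ((∫ ω, |f ω| ^ q ∂μ) / a ^ q) :=
        ENNReal.ofReal_le_ofReal (by rwa [le_div_iff₀ haq, mul_comm])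

theorem exists_forall_measure_exists_abs_gt_le {ξ : ℕ → Ω → ℝ} {q : ℝ} (hq : 0 < q)
    (hident : ∀ i, IdentDistrib (ξ i) (ξ 0) μ μ) (hint : Integrable (fun ω => |ξ 0 ω| ^ q) μ)
    {δ : ℝ} (hδ : 0 < δ) :
    ∃ K > 0, ∀ n : ℕ,
      μ {ω | ∃ i < n, K * (n : ℝ) ^ (1 / q) < |ξ i ω|} ≤ ENNReal.ofReal δ := by
  set E := ∫ ω, |ξ 0 ω| ^ q ∂μ
  have hE : 0 ≤ E := integral_nonneg fun ω => Real.rpow_nonneg (abs_nonneg _) q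
  set K := ((E + 1) / δ) ^ (1 / q)
  have hKq : K ^ q = (E + 1) / δ := by
    rw [← Real.rpow_mul (by positivity), one_div_mul_cancel hq.ne', Real.rpow_one]
  refine ⟨K, by positivity, fun n => ?_⟩
  have hmoment : ∀ i, ∫ ω, |ξ i ω| ^ q ∂μ = E := fun i =>
    ((hident i).comp ((measurable_id.abs).pow_const q)).integral_eq
  have hint_i : ∀ i, Integrable (fun ω => |ξ i ω| ^ q) μ := fun i =>
    ((hident i).comp ((measurable_id.abs).pow_const q)).integrable_iff.mpr hint
  rcases n.eq_zero_or_pos with rfl | hn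
  · simp
  have hthreshold : (K * (n : ℝ) ^ (1 / q)) ^ q = (E + 1) / δ * n := by
    rw [Real.mul_rpow (by positivity) (by positivity), ← Real.rpow_mul (Nat.cast_nonneg n),
      one_div_mul_cancel hq.ne', Real.rpow_one, hKq]
  have hterm : E / ((E + 1) / δ * n) ≤ δ / n := by
    rw [div_le_div_iff₀ (by positivity) (by positivity)]
    field_simp
    nlinarith
  calc μ {ω | ∃ i < n, K * (n : ℝ) ^ (1 / q) < |ξ i ω|}
      = μ (⋃ i ∈ Finset.range n, {ω | K * (n : ℝ) ^ (1 / q) < |ξ i ω|}) := by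
        congr 1; ext ω; simp
    _ ≤ ∑ i ∈ Finset.range n, μ {ω | K * (n : ℝ) ^ (1 / q) < |ξ i ω|} :=
        measure_biUnion_finset_le _ _
    _ ≤ ∑ _i ∈ Finset.range n, ENNReal.ofReal (δ / n) := by
        refine Finset.sum_le_sum fun i _ => ?_
        refine (measure_lt_abs_le_integral_rpow_div hq (by positivity) (hint_i i)).trans ?_
        rw [hmoment, hthreshold]
        exact ENNReal.ofReal_le_ofReal hterm
    _ = ENNReal.ofReal δ := by
        rw [Finset.sum_const, Finset.card_range, nsmul_eq_mul, ← ENNReal.ofReal_natCast,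
          ← ENNReal.ofReal_mul (Nat.cast_nonneg n), mul_div_cancel₀ _ (by positivity)]

end Probability

theorem sup_profile_lse_Op_general
    {d : ℕ} {Ω : Type*} [MeasurableSpace Ω] (μ : Measure Ω) [IsProbabilityMeasure μ]
    (Θ : Set (EuclideanSpace ℝ (Fin d))) (T : ℝ)
    (θ0 : EuclideanSpace ℝ (Fin d))
    (X : ℕ → Ω → EuclideanSpace ℝ (Fin d)) (ε : ℕ → Ω → ℝ)
    -- the sample is i.i.d.
    (hident : ∀ i, IdentDistrib (fun ω => (X i ω, ε i ω)) (fun ω => (X 0 ω, ε 0 ω)) μ μ)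
    -- (A2)
    (η0 : ℝ → ℝ)
    (hη0anti : AntitoneOn η0 (Ici 0))
    (hη0nonneg : ∀ t ∈ Ici (0 : ℝ), 0 ≤ η0 t)
    -- (A3)
    (q : ℝ) (hq : 2 ≤ q)
    (hmint : Integrable (fun ω => |ε 0 ω| ^ q) μ)
    -- responses
    (Y : ℕ → Ω → ℝ) (hY : ∀ i ω, Y i ω = η0 (‖θ0 - X i ω‖ ^ 2) + ε i ω)
    -- the profile least squares estimator
    (ηhat : ℕ → Ω → EuclideanSpace ℝ (Fin d) → ℝ → ℝ)
    (hηhatM : ∀ n ω, ∀ θ ∈ Θ, AntitoneOn (ηhat n ω θ) (Icc 0 (4 * T ^ 2)) ∧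
      ∀ t ∈ Icc (0 : ℝ) (4 * T ^ 2), 0 ≤ ηhat n ω θ t)
    (hηhatmin : ∀ n ω, ∀ θ ∈ Θ, ∀ η : ℝ → ℝ,
      AntitoneOn η (Icc 0 (4 * T ^ 2)) → (∀ t ∈ Icc (0 : ℝ) (4 * T ^ 2), 0 ≤ η t) →
      ∑ i ∈ Finset.range n, (Y i ω - ηhat n ω θ (‖θ - X i ω‖ ^ 2)) ^ 2 ≤
        ∑ i ∈ Finset.range n, (Y i ω - η (‖θ - X i ω‖ ^ 2)) ^ 2)
    -- right-continuous piecewise-constant extension: all values are fitted values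
    (hηhatpc : ∀ n, 0 < n → ∀ ω, ∀ θ ∈ Θ, ∀ t ∈ Icc (0 : ℝ) (4 * T ^ 2),
      ∃ i < n, ηhat n ω θ t = ηhat n ω θ (‖θ - X i ω‖ ^ 2)) :
    -- conclusion: sup_{θ∈Θ} ‖η̃_θ‖_∞ = O_p(n^{1/q})
    ∀ δ > (0 : ℝ), ∃ C : ℝ, ∃ N : ℕ, ∀ n ≥ N,
      μ {ω | ∃ θ ∈ Θ, ∃ t ∈ Icc (0 : ℝ) (4 * T ^ 2),
        C * (n : ℝ) ^ (1 / q) < |ηhat n ω θ t|} ≤ ENNReal.ofReal δ := by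
  intro δ hδ
  obtain ⟨K, hK, hmax⟩ := exists_forall_measure_exists_abs_gt_le (ξ := ε)
    (lt_of_lt_of_le two_pos hq) (fun i => (hident i).comp measurable_snd) hmint hδ
  have hB : 0 ≤ η0 0 := hη0nonneg 0 self_mem_Ici
  refine ⟨η0 0 + K, 1, fun n hn => (measure_mono ?_).trans (hmax n)⟩
  rintro ω ⟨θ, hθ, t, ht, hlarge⟩
  change ∃ i < n, _
  by_contra! hsmall
  have hrate : 1 ≤ (n : ℝ) ^ (1 / q) :=
    Real.one_le_rpow (by exact_mod_cast hn) (by positivity)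
  have hresp : ∀ i ∈ Finset.range n, Y i ω ≤ η0 0 + K * (n : ℝ) ^ (1 / q) := by
    intro i hi
    rw [hY]
    have hη0 : η0 (‖θ0 - X i ω‖ ^ 2) ≤ η0 0 :=
      hη0anti self_mem_Ici (mem_Ici.mpr (by positivity)) (by positivity)
    linarith [le_abs_self (ε i ω), hsmall i (Finset.mem_range.mp hi)]
  obtain ⟨hanti, hnonneg⟩ := hηhatM n ω θ hθ
  obtain ⟨j, hj, hfitted⟩ := hηhatpc n hn ω θ hθ t ht
  have hbound := antitoneOn_lse_apply_le hanti hnonneg (hηhatmin n ω θ hθ)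
    (by positivity) hresp (Finset.mem_range.mpr hj)
  rw [abs_of_nonneg (hnonneg t ht), hfitted] at hlarge
  nlinarith

/-- **Theorem 3.1, first assertion.** Under (A1)–(A3), the profile least squares estimator
`η̃_θ` (a minimizer of `Q_n(·, θ)` over the class `M` of nonincreasing nonnegative functions
on `[0, 4T²]`, taking values among its fitted values at the data points) satisfies
`sup_{θ∈Θ} ‖η̃_θ‖_∞ = O_p(n^{1/q})`. -/
theorem sup_profile_lse_Op
    {d : ℕ} {Ω : Type*} [MeasurableSpace Ω] (μ : Measure Ω) [IsProbabilityMeasure μ]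
    (χ Θ : Set (EuclideanSpace ℝ (Fin d))) (T : ℝ)
    (θ0 : EuclideanSpace ℝ (Fin d))
    -- (A1)
    (hχbd : Bornology.IsBounded χ) (hχconv : Convex ℝ χ)
    (hχint : (interior χ).Nonempty)
    (hΘbd : Bornology.IsBounded Θ) (hΘint : (interior Θ).Nonempty)
    (hθ0 : θ0 ∈ interior Θ)
    (hχT : ∀ x ∈ χ, ‖x‖ ≤ T) (hΘT : ∀ θ ∈ Θ, ‖θ‖ ≤ T)
    (X : ℕ → Ω → EuclideanSpace ℝ (Fin d)) (ε : ℕ → Ω → ℝ)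
    (hXmeas : ∀ i, Measurable (X i)) (hεmeas : ∀ i, Measurable (ε i))
    (hXχ : ∀ i, ∀ᵐ ω ∂μ, X i ω ∈ χ)
    (Cdens : ℝ)
    (hdens : ∀ i s, Measure.map (X i) μ s ≤ ENNReal.ofReal Cdens * volume s)
    -- the sample is i.i.d.
    (hindep : iIndepFun (fun i ω => (X i ω, ε i ω)) μ)
    (hident : ∀ i, IdentDistrib (fun ω => (X i ω, ε i ω)) (fun ω => (X 0 ω, ε 0 ω)) μ μ)
    -- (A2)
    (η0 : ℝ → ℝ)
    (hη0diff : ContDiffOn ℝ 1 η0 (Ici 0))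
    (hη0anti : AntitoneOn η0 (Ici 0))
    (hη0nonneg : ∀ t ∈ Ici (0 : ℝ), 0 ≤ η0 t)
    (hη0noncst : ∃ s ∈ Ici (0 : ℝ), ∃ t ∈ Ici (0 : ℝ), η0 s ≠ η0 t)
    -- (A3)
    (q Kq σ2 : ℝ) (hq : 2 ≤ q)
    (hcondmean : ∀ i, μ[ε i | MeasurableSpace.comap (X i) inferInstance] =ᵐ[μ] 0)
    (hmom : ∫ ω, |ε 0 ω| ^ q ∂μ = Kq ^ q)
    (hmint : Integrable (fun ω => |ε 0 ω| ^ q) μ)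
    (hcondvar : ∀ i, ∀ᵐ ω ∂μ,
      (μ[fun ω' => ε i ω' ^ 2 | MeasurableSpace.comap (X i) inferInstance]) ω ≤ σ2)
    -- responses
    (Y : ℕ → Ω → ℝ) (hY : ∀ i ω, Y i ω = η0 (‖θ0 - X i ω‖ ^ 2) + ε i ω)
    -- the profile least squares estimator
    (ηhat : ℕ → Ω → EuclideanSpace ℝ (Fin d) → ℝ → ℝ)
    (hηhatM : ∀ n ω, ∀ θ ∈ Θ, AntitoneOn (ηhat n ω θ) (Icc 0 (4 * T ^ 2)) ∧
      ∀ t ∈ Icc (0 : ℝ) (4 * T ^ 2), 0 ≤ ηhat n ω θ t)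
    (hηhatmin : ∀ n ω, ∀ θ ∈ Θ, ∀ η : ℝ → ℝ,
      AntitoneOn η (Icc 0 (4 * T ^ 2)) → (∀ t ∈ Icc (0 : ℝ) (4 * T ^ 2), 0 ≤ η t) →
      ∑ i ∈ Finset.range n, (Y i ω - ηhat n ω θ (‖θ - X i ω‖ ^ 2)) ^ 2 ≤
        ∑ i ∈ Finset.range n, (Y i ω - η (‖θ - X i ω‖ ^ 2)) ^ 2)
    -- right-continuous piecewise-constant extension: all values are fitted values
    (hηhatpc : ∀ n, 0 < n → ∀ ω, ∀ θ ∈ Θ, ∀ t ∈ Icc (0 : ℝ) (4 * T ^ 2),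
      ∃ i < n, ηhat n ω θ t = ηhat n ω θ (‖θ - X i ω‖ ^ 2)) :
    -- conclusion: sup_{θ∈Θ} ‖η̃_θ‖_∞ = O_p(n^{1/q})
    ∀ δ > (0 : ℝ), ∃ C : ℝ, ∃ N : ℕ, ∀ n ≥ N,
      μ {ω | ∃ θ ∈ Θ, ∃ t ∈ Icc (0 : ℝ) (4 * T ^ 2),
        C * (n : ℝ) ^ (1 / q) < |ηhat n ω θ t|} ≤ ENNReal.ofReal δ :=
  sup_profile_lse_Op_general μ Θ T θ0 X ε hident η0 hη0anti hη0nonneg q hq hmint Y hY ηhat hηhatM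
    hηhatmin hηhatpc
end

section
/- Suppose assumptions (A1)–(A2) hold, and suppose the model is identifiable in the sense that for every β ∈ Θ and every nonincreasing g : [0,∞) → [0,∞) with g(|β − x|²) = η0(|θ0 − x|²) for P_X-almost every x ∈ χ, one has β = θ0. Let θ_n ∈ Θ and let η_n : [0,∞) → [0,∞) be nonincreasing, for each n. If ∫ (η_n(|θ_n − x|²) − η0(|θ0 − x|²))² dP_X(x) → 0 as n → ∞, then θ_n → θ0. (Deterministic separation lemma proved in the second part of the proof of Theorem 3.3: joint L²(P_X) consistency of a monotone-plus-location sequence forces consistency of the location.) -/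
open MeasureTheory Set Metric Filter

/-!
L² convergence gives convergence in measure, so along a subsequence `θ_n → β` and
`η_n(|θ_n - x|²) → η0(|θ0 - x|²)` for a.e. `x`. Passing to the limit in the monotonicity
of `η_n` shows that `f = η0(|θ0 - ·|²)` is a nonincreasing function of the distance to `β`
on a conull set, and trivially also of the distance to `θ0`. Since `|c - x|² - |c - y|²` is
affine in `c`, the same holds for every centre `c` on the segment `[θ0, β]`. For such `c`, the
upper envelope of `f` along spheres around `c` is a nonincreasing `g` with `g(|c - x|²) = f x`
except on countably many spheres, which are null for an absolutely continuous `P_X`;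
identifiability then forces `c = θ0`. Choosing `c ≠ θ0` in `Θ`, which is possible as `θ0` is
interior, gives `β = θ0`.
-/

open scoped RealInnerProductSpace Topology

theorem tendstoInMeasure_of_tendsto_integral_sq_sub {α ι : Type*} [MeasurableSpace α]
    {μ : Measure α} [IsFiniteMeasure μ] {l : Filter ι} {f : ι → α → ℝ} {g : α → ℝ}
    (hint : ∀ i, Integrable (fun x => (f i x - g x) ^ 2) μ)
    (h : Tendsto (fun i => ∫ x, (f i x - g x) ^ 2 ∂μ) l (𝓝 0)) :
    TendstoInMeasure μ f l g := by
  refine tendstoInMeasure_iff_measureReal_norm.2 fun ε hε => ?_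
  have hmarkov : ∀ i,
      μ.real {x | ε ≤ ‖f i x - g x‖} ≤ (∫ x, (f i x - g x) ^ 2 ∂μ) / ε ^ 2 := by
    intro i
    rw [le_div_iff₀' (by positivity)]
    calc ε ^ 2 * μ.real {x | ε ≤ ‖f i x - g x‖}
        ≤ ε ^ 2 * μ.real {x | ε ^ 2 ≤ (f i x - g x) ^ 2} := by
          gcongr ε ^ 2 * ?_
          refine measureReal_mono fun x (hx : ε ≤ ‖f i x - g x‖) => ?_
          simpa only [mem_ofPred_eq, Real.norm_eq_abs, sq_abs] using
            pow_le_pow_left₀ hε.le hx 2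
      _ ≤ ∫ x, (f i x - g x) ^ 2 ∂μ :=
          mul_meas_ge_le_integral_of_nonneg (ae_of_all _ fun x => sq_nonneg _) (hint i) _
  have hlim := h.div_const (ε ^ 2)
  rw [zero_div] at hlim
  exact squeeze_zero (fun i => measureReal_nonneg) hmarkov hlim

section ModelFunction

variable {E : Type*} [NormedAddCommGroup E] {η : ℝ → ℝ}

theorem AntitoneOn.measurable_comp_norm_sub_sq [MeasurableSpace E] [OpensMeasurableSpace E]
    (hη : AntitoneOn η (Ici 0)) (θ : E) : Measurable fun x : E => η (‖θ - x‖ ^ 2) := by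
  have hext : Antitone fun t => η (max t 0) := fun s t hst =>
    hη (mem_Ici.2 (le_max_right _ _)) (mem_Ici.2 (le_max_right _ _)) (max_le_max hst le_rfl)
  have hdist : Continuous fun x : E => ‖θ - x‖ ^ 2 := by fun_prop
  convert hext.measurable.comp hdist.measurable using 2 with x
  simp only [Function.comp_apply, max_eq_left (sq_nonneg _)]

theorem memLp_comp_norm_sub_sq [MeasurableSpace E] [OpensMeasurableSpace E] {μ : Measure E}
    [IsFiniteMeasure μ] (hη : AntitoneOn η (Ici 0)) (hη0 : ∀ t ∈ Ici (0 : ℝ), 0 ≤ η t) (θ : E)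
    (p : ENNReal) : MemLp (fun x : E => η (‖θ - x‖ ^ 2)) p μ :=
  MemLp.of_bound (hη.measurable_comp_norm_sub_sq θ).aestronglyMeasurable (η 0) <|
    ae_of_all _ fun x => by
      rw [Real.norm_of_nonneg (hη0 _ (mem_Ici.2 (sq_nonneg _)))]
      exact hη self_mem_Ici (mem_Ici.2 (sq_nonneg _)) (sq_nonneg _)

end ModelFunction

section Radial

variable {E : Type*} [NormedAddCommGroup E]

def RadiallyAntitoneOn (f : E → ℝ) (c : E) (A : Set E) : Prop :=
  ∀ x ∈ A, ∀ y ∈ A, ‖c - x‖ ^ 2 < ‖c - y‖ ^ 2 → f y ≤ f x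

theorem radiallyAntitoneOn_comp_norm_sub_sq {η : ℝ → ℝ} (hη : AntitoneOn η (Ici 0)) (c : E)
    (A : Set E) : RadiallyAntitoneOn (fun x => η (‖c - x‖ ^ 2)) c A :=
  fun _ _ _ _ hlt => hη (mem_Ici.2 (sq_nonneg _)) (mem_Ici.2 (sq_nonneg _)) hlt.le

theorem radiallyAntitoneOn_of_tendsto {ι : Type*} {l : Filter ι} [l.NeBot] {η : ι → ℝ → ℝ}
    (hη : ∀ i, AntitoneOn (η i) (Ici 0)) {θ : ι → E} {β : E} (hθ : Tendsto θ l (𝓝 β))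
    {f : E → ℝ} {A : Set E}
    (hA : ∀ x ∈ A, Tendsto (fun i => η i (‖θ i - x‖ ^ 2)) l (𝓝 (f x))) :
    RadiallyAntitoneOn f β A := by
  intro x hx y hy hlt
  have hdist : ∀ z, Tendsto (fun i => ‖θ i - z‖ ^ 2) l (𝓝 (‖β - z‖ ^ 2)) := fun z =>
    ((hθ.sub tendsto_const_nhds).norm).pow 2
  refine le_of_tendsto_of_tendsto (hA y hy) (hA x hx) ?_
  filter_upwards [(hdist x).eventually_lt (hdist y) hlt] with i hi
  exact hη i (mem_Ici.2 (sq_nonneg _)) (mem_Ici.2 (sq_nonneg _)) hi.le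

theorem norm_sub_sq_sub_norm_sub_sq [InnerProductSpace ℝ E] (c x y : E) :
    ‖c - x‖ ^ 2 - ‖c - y‖ ^ 2 = ‖x‖ ^ 2 - ‖y‖ ^ 2 - 2 * ⟪c, x - y⟫ := by
  rw [norm_sub_sq_real, norm_sub_sq_real, inner_sub_right]
  ring

theorem convex_setOf_radiallyAntitoneOn [InnerProductSpace ℝ E] (f : E → ℝ) (A : Set E) :
    Convex ℝ {c | RadiallyAntitoneOn f c A} := by
  intro a ha b hb s t hs ht hst x hx y hy hlt
  by_contra! hfxy
  have hxa : ‖a - y‖ ^ 2 ≤ ‖a - x‖ ^ 2 := not_lt.1 fun h => (ha x hx y hy h).not_gt hfxy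
  have hxb : ‖b - y‖ ^ 2 ≤ ‖b - x‖ ^ 2 := not_lt.1 fun h => (hb x hx y hy h).not_gt hfxy
  have haffine : ‖s • a + t • b - x‖ ^ 2 - ‖s • a + t • b - y‖ ^ 2 =
      s * (‖a - x‖ ^ 2 - ‖a - y‖ ^ 2) + t * (‖b - x‖ ^ 2 - ‖b - y‖ ^ 2) := by
    simp only [norm_sub_sq_sub_norm_sub_sq, inner_add_left, real_inner_smul_left]
    linear_combination (‖x‖ ^ 2 - ‖y‖ ^ 2) * hst.symm
  nlinarith [mul_nonneg hs (sub_nonneg.2 hxa), mul_nonneg ht (sub_nonneg.2 hxb)]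

end Radial

theorem exists_antitone_eq_off_countable {α : Type*} {A : Set α} {r f : α → ℝ}
    (hf : ∀ x ∈ A, ∀ y ∈ A, r x < r y → f y ≤ f x) (hf0 : ∀ x ∈ A, 0 ≤ f x)
    (hfC : BddAbove (f '' A)) :
    ∃ g : ℝ → ℝ, Antitone g ∧ (∀ s, 0 ≤ g s) ∧
      ∃ D : Set ℝ, D.Countable ∧ ∀ x ∈ A, r x ∉ D → g (r x) = f x := by
  -- the inserted `0` keeps `S s` nonempty (so `sSup` is no junk value) and `g` nonnegative
  set S : ℝ → Set ℝ := fun s => insert 0 (f '' {y ∈ A | s < r y})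
  have hS : ∀ s, BddAbove (S s) := fun s =>
    (hfC.mono (image_mono (sep_subset _ _))).insert 0
  set g : ℝ → ℝ := fun s => sSup (S s)
  have hg : Antitone g := fun s s' hss' =>
    csSup_le_csSup (hS s) (insert_nonempty _ _) <|
      insert_subset_insert <| image_mono fun y hy => ⟨hy.1, hss'.trans_lt hy.2⟩
  have hupper : ∀ x ∈ A, g (r x) ≤ f x := fun x hx =>
    csSup_le (insert_nonempty _ _) <| by
      rintro _ (rfl | ⟨y, ⟨hyA, hxy⟩, rfl⟩)
      exacts [hf0 x hx, hf x hx y hyA hxy]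
  have hlower : ∀ x ∈ A, ∀ s < r x, f x ≤ g s := fun x hx s hs =>
    le_csSup (hS s) (mem_insert_of_mem _ ⟨x, ⟨hx, hs⟩, rfl⟩)
  refine ⟨g, hg, fun s => le_csSup (hS s) (mem_insert _ _),
    {s | ¬ContinuousAt g s}, hg.countable_not_continuousAt, fun x hx hcont => ?_⟩
  exact (hupper x hx).antisymm <|
    ge_of_tendsto ((not_not.1 hcont).mono_left (nhdsWithin_le_nhds (s := Iio (r x))))
      (eventually_nhdsWithin_of_forall fun s hs => hlower x hx s hs)

section Lebesgue

variable {E : Type*} [NormedAddCommGroup E] [NormedSpace ℝ E] [MeasurableSpace E]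
  [BorelSpace E] [FiniteDimensional ℝ E] [Nontrivial E] {ν μ : Measure E} [ν.IsAddHaarMeasure]

theorem ae_norm_sub_sq_notMem (hμ : μ ≪ ν) (c : E) {D : Set ℝ} (hD : D.Countable) :
    ∀ᵐ x ∂μ, ‖c - x‖ ^ 2 ∉ D := by
  refine hμ.ae_le (measure_mono_null (fun x hx => ?_) ((measure_biUnion_null_iff hD).2
    fun s _ => Measure.addHaar_sphere ν c (Real.sqrt s)))
  refine mem_biUnion (not_not.1 hx) ?_
  rw [mem_sphere, dist_eq_norm, norm_sub_rev, Real.sqrt_sq (norm_nonneg _)]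

theorem exists_antitone_ae_eq_of_radiallyAntitoneOn (hμ : μ ≪ ν) {c : E} {f : E → ℝ}
    {A : Set E} (hA : ∀ᵐ x ∂μ, x ∈ A) (hf : RadiallyAntitoneOn f c A) (hf0 : ∀ x, 0 ≤ f x)
    (hfC : BddAbove (range f)) :
    ∃ g : ℝ → ℝ, Antitone g ∧ (∀ s, 0 ≤ g s) ∧ ∀ᵐ x ∂μ, g (‖c - x‖ ^ 2) = f x := by
  obtain ⟨g, hg, hg0, D, hD, hgf⟩ :=
    exists_antitone_eq_off_countable hf (fun x _ => hf0 x) (hfC.mono (image_subset_range _ _))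
  refine ⟨g, hg, hg0, ?_⟩
  filter_upwards [hA, ae_norm_sub_sq_notMem hμ c hD] with x hxA hxD
  exact hgf x hxA hxD

end Lebesgue

theorem exists_mem_openSegment_of_mem_interior {E : Type*} [NormedAddCommGroup E]
    [NormedSpace ℝ E] {s : Set E} {a : E} (ha : a ∈ interior s) (b : E) :
    ∃ c ∈ s, c ∈ openSegment ℝ a b := by
  have hnear : ∀ᶠ t in 𝓝[>] (0 : ℝ), AffineMap.lineMap a b t ∈ s :=
    nhdsWithin_le_nhds (((AffineMap.lineMap_continuous (R := ℝ)).tendsto' 0 a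
      (AffineMap.lineMap_apply_zero a b)).eventually (mem_interior_iff_mem_nhds.1 ha))
  obtain ⟨t, hts, ht⟩ := (hnear.and (Ioo_mem_nhdsGT zero_lt_one)).exists
  exact ⟨_, hts, lineMap_mem_openSegment ℝ a b ht⟩

theorem location_consistency_from_joint_L2_consistency_general
    {d : ℕ}
    (Θ : Set (EuclideanSpace ℝ (Fin d)))
    (θ0 : EuclideanSpace ℝ (Fin d))
    (PX : Measure (EuclideanSpace ℝ (Fin d))) [IsProbabilityMeasure PX]
    -- (A1)
    (Cdens : ℝ) (hdens : ∀ s, PX s ≤ ENNReal.ofReal Cdens * volume s)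
    (hΘbd : Bornology.IsBounded Θ)
    (hθ0 : θ0 ∈ interior Θ)
    -- (A2)
    (η0 : ℝ → ℝ)
    (hη0anti : AntitoneOn η0 (Ici 0))
    (hη0nonneg : ∀ t ∈ Ici (0 : ℝ), 0 ≤ η0 t)
    -- identifiability of the model
    (hident : ∀ β ∈ Θ, ∀ g : ℝ → ℝ, AntitoneOn g (Ici 0) →
      (∀ t ∈ Ici (0 : ℝ), 0 ≤ g t) →
      (∀ᵐ x ∂PX, g (‖β - x‖ ^ 2) = η0 (‖θ0 - x‖ ^ 2)) → β = θ0)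
    -- the sequences
    (θseq : ℕ → EuclideanSpace ℝ (Fin d)) (hθseq : ∀ n, θseq n ∈ Θ)
    (ηseq : ℕ → ℝ → ℝ)
    (hηseqanti : ∀ n, AntitoneOn (ηseq n) (Ici 0))
    (hηseqnonneg : ∀ n, ∀ t ∈ Ici (0 : ℝ), 0 ≤ ηseq n t)
    (hconv : Tendsto
      (fun n => ∫ x, (ηseq n (‖θseq n - x‖ ^ 2) - η0 (‖θ0 - x‖ ^ 2)) ^ 2 ∂PX)
      atTop (nhds 0)) :
    Tendsto θseq atTop (nhds θ0) := by
  rcases subsingleton_or_nontrivial (EuclideanSpace ℝ (Fin d)) with _ | _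
  · exact tendsto_const_nhds.congr fun n => Subsingleton.elim _ _
  set f := fun x : EuclideanSpace ℝ (Fin d) => η0 (‖θ0 - x‖ ^ 2)
  have hPX : PX ≪ volume := fun s hs => le_antisymm ((hdens s).trans (by simp [hs])) zero_le
  have hf0 : ∀ x, 0 ≤ f x := fun x => hη0nonneg _ (mem_Ici.2 (sq_nonneg _))
  have hfC : BddAbove (range f) :=
    ⟨η0 0, forall_mem_range.2 fun x =>
      hη0anti self_mem_Ici (mem_Ici.2 (sq_nonneg _)) (sq_nonneg _)⟩
  have hmeas : TendstoInMeasure PX (fun n x => ηseq n (‖θseq n - x‖ ^ 2)) atTop f :=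
    tendstoInMeasure_of_tendsto_integral_sq_sub (fun n =>
      ((memLp_comp_norm_sub_sq (hηseqanti n) (hηseqnonneg n) (θseq n) 2).sub
        (memLp_comp_norm_sub_sq hη0anti hη0nonneg θ0 2)).integrable_sq) hconv
  refine hΘbd.isCompact_closure.tendsto_nhds_of_unique_mapClusterPt
    (Eventually.of_forall fun n => subset_closure (hθseq n)) fun β _ hβ => ?_
  obtain ⟨ψ, hψ, hθψ⟩ := hβ.tendsto_subseq
  obtain ⟨φ, hφ, hae⟩ := (hmeas.comp hψ.tendsto_atTop).exists_seq_tendsto_ae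
  set A := {x | Tendsto (fun k => ηseq (ψ (φ k)) (‖θseq (ψ (φ k)) - x‖ ^ 2)) atTop (𝓝 (f x))}
  have hβA : RadiallyAntitoneOn f β A := radiallyAntitoneOn_of_tendsto
    (fun k => hηseqanti (ψ (φ k))) (hθψ.comp hφ.tendsto_atTop) fun x hx => hx
  by_contra hne
  obtain ⟨c, hcΘ, hc⟩ := exists_mem_openSegment_of_mem_interior hθ0 β
  obtain ⟨g, hg, hg0, hgf⟩ := exists_antitone_ae_eq_of_radiallyAntitoneOn hPX
    (hae : ∀ᵐ x ∂PX, x ∈ A) ((convex_setOf_radiallyAntitoneOn f A).openSegment_subset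
      (radiallyAntitoneOn_comp_norm_sub_sq hη0anti θ0 _) hβA hc) hf0 hfC
  have hcθ0 : c = θ0 := hident c hcΘ g (hg.antitoneOn _) (fun s _ => hg0 s) hgf
  exact hne (left_mem_openSegment_iff.1 (hcθ0 ▸ hc)).symm

/-- **Separation lemma from the proof of Theorem 3.3.**
Under (A1)–(A2) and identifiability of the model, if `θ_n ∈ Θ` and `η_n` is nonincreasing and
nonnegative on `[0,∞)` with `∫ (η_n(|θ_n-x|²) - η0(|θ0-x|²))² dP_X(x) → 0`, then `θ_n → θ0`. -/
theorem location_consistency_from_joint_L2_consistency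
    {d : ℕ}
    (χ Θ : Set (EuclideanSpace ℝ (Fin d))) (T : ℝ)
    (θ0 : EuclideanSpace ℝ (Fin d))
    (PX : Measure (EuclideanSpace ℝ (Fin d))) [IsProbabilityMeasure PX]
    -- (A1)
    (hχbd : Bornology.IsBounded χ) (hχconv : Convex ℝ χ)
    (hχint : (interior χ).Nonempty)
    (hPXsupp : PX χᶜ = 0)
    (Cdens : ℝ) (hdens : ∀ s, PX s ≤ ENNReal.ofReal Cdens * volume s)
    (hΘbd : Bornology.IsBounded Θ) (hΘint : (interior Θ).Nonempty)
    (hθ0 : θ0 ∈ interior Θ)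
    (hχT : ∀ x ∈ χ, ‖x‖ ≤ T) (hΘT : ∀ θ ∈ Θ, ‖θ‖ ≤ T)
    -- (A2)
    (η0 : ℝ → ℝ)
    (hη0diff : ContDiffOn ℝ 1 η0 (Ici 0))
    (hη0anti : AntitoneOn η0 (Ici 0))
    (hη0nonneg : ∀ t ∈ Ici (0 : ℝ), 0 ≤ η0 t)
    (hη0noncst : ∃ s ∈ Ici (0 : ℝ), ∃ t ∈ Ici (0 : ℝ), η0 s ≠ η0 t)
    -- identifiability of the model
    (hident : ∀ β ∈ Θ, ∀ g : ℝ → ℝ, AntitoneOn g (Ici 0) →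
      (∀ t ∈ Ici (0 : ℝ), 0 ≤ g t) →
      (∀ᵐ x ∂PX, g (‖β - x‖ ^ 2) = η0 (‖θ0 - x‖ ^ 2)) → β = θ0)
    -- the sequences
    (θseq : ℕ → EuclideanSpace ℝ (Fin d)) (hθseq : ∀ n, θseq n ∈ Θ)
    (ηseq : ℕ → ℝ → ℝ)
    (hηseqanti : ∀ n, AntitoneOn (ηseq n) (Ici 0))
    (hηseqnonneg : ∀ n, ∀ t ∈ Ici (0 : ℝ), 0 ≤ ηseq n t)
    (hconv : Tendsto
      (fun n => ∫ x, (ηseq n (‖θseq n - x‖ ^ 2) - η0 (‖θ0 - x‖ ^ 2)) ^ 2 ∂PX)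
      atTop (nhds 0)) :
    Tendsto θseq atTop (nhds θ0) :=
  location_consistency_from_joint_L2_consistency_general Θ θ0 PX Cdens hdens hΘbd hθ0 η0 hη0anti
    hη0nonneg hident θseq hθseq ηseq hηseqanti hηseqnonneg hconv
end
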